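/- Let n ≥ 2 be an even integer and m = n + 2. Consider the column sums c_{2l−1} = c_{2l} = n − 2(l−1) for l = 1,…,n/2 (i.e. the sequence (n, n, n−2, n−2, …, 4, 4, 2, 2)) and the row sums r_1 = n, r_{2l} = r_{2l+1} = n − 2l + 1 for l = 1,…,n/2, and r_m = 0 (i.e. the sequence (n, n−1, n−1, n−3, n−3, …, 3, 3, 1, 1, 0)). Then: (a) every binary image F ⊆ {1,…,m} × {1,…,n} with these row and column sums has horizontal boundary of length L_h ≥ 3n; and (b) there exists such a binary image F with L_h = 3n. -/

import Mathlib

/-- The row sum `r i` of a binary image `F`: the number of points of `F` in row `i`. -/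
def rowSum (F : Finset (ℤ × ℤ)) (i : ℤ) : ℕ := (F.filter fun p => p.1 = i).card

/-- The column sum `c j` of a binary image `F`: the number of points of `F` in column `j`. -/
def colSum (F : Finset (ℤ × ℤ)) (j : ℤ) : ℕ := (F.filter fun p => p.2 = j).card

/-- The length of the horizontal boundary of `F`: the number of pairs
`((i,j),(i',j'))` with `j = j'`, `|i - i'| = 1`, `(i,j) ∈ F` and `(i',j') ∉ F`. -/
noncomputable def horizBoundaryLen (F : Finset (ℤ × ℤ)) : ℕ :=
  Set.ncard {q : (ℤ × ℤ) × (ℤ × ℤ) |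
    q.1.2 = q.2.2 ∧ |q.1.1 - q.2.1| = 1 ∧ q.1 ∈ F ∧ q.2 ∉ F}

/-- `F ⊆ {1,…,m} × {1,…,n}` has the line sums of Example 3:
column sums `(n, n, n-2, n-2, …, 4, 4, 2, 2)` (i.e. `c_{2l-1} = c_{2l} = n - 2(l-1)`
for `1 ≤ l ≤ n/2`) and row sums `(n, n-1, n-1, n-3, n-3, …, 3, 3, 1, 1, 0)`
(i.e. `r_1 = n`, `r_{2l} = r_{2l+1} = n - 2l + 1` for `1 ≤ l ≤ n/2`, `r_m = 0`). -/
def example3Image (m n : ℕ) (F : Finset (ℤ × ℤ)) : Prop :=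
  (∀ p ∈ F, p.1 ∈ Finset.Icc (1 : ℤ) (m : ℤ) ∧ p.2 ∈ Finset.Icc (1 : ℤ) (n : ℤ)) ∧
  rowSum F 1 = n ∧
  (∀ l : ℤ, 1 ≤ l → 2 * l ≤ (n : ℤ) →
    (rowSum F (2 * l) : ℤ) = (n : ℤ) - 2 * l + 1 ∧
    (rowSum F (2 * l + 1) : ℤ) = (n : ℤ) - 2 * l + 1) ∧
  rowSum F (m : ℤ) = 0 ∧
  (∀ l : ℤ, 1 ≤ l → 2 * l ≤ (n : ℤ) →
    (colSum F (2 * l - 1) : ℤ) = (n : ℤ) - 2 * (l - 1) ∧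
    (colSum F (2 * l) : ℤ) = (n : ℤ) - 2 * (l - 1))

/-! Split the horizontal boundary column by column: a column contributes two for each maximal
run of consecutive cells. With `n = 2k`, an induction from the left shows that every
reconstruction is a staircase up to swapping the two columns of each pair. Once columns
`1, …, 2l` are known, rows `2k - 2l` and `2k - 2l + 1` (row sum `2l + 1`) are full on them and
have one spare cell each, while columns `2l + 1`, `2l + 2` (column sum `2k - 2l`) live in rows
`1, …, 2k - 2l + 1` and so each needs one of these two cells. Hence one of them is `[1, c]` and
the other `[1, c + 1] \ {c}` with `c = 2k - 2l`, contributing `2 + 4` to the boundary. So every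
reconstruction has `L_h = 6k = 3n`. -/

open Finset

namespace BinaryImage

variable {F : Finset (ℤ × ℤ)}

def column (F : Finset (ℤ × ℤ)) (j : ℤ) : Finset ℤ := {p ∈ F | p.2 = j}.image Prod.fst

def row (F : Finset (ℤ × ℤ)) (i : ℤ) : Finset ℤ := {p ∈ F | p.1 = i}.image Prod.snd

@[simp] lemma mem_column {i j : ℤ} : i ∈ column F j ↔ (i, j) ∈ F := by
  simp [column]

@[simp] lemma mem_row {i j : ℤ} : j ∈ row F i ↔ (i, j) ∈ F := by
  simp [row]

lemma card_column (F : Finset (ℤ × ℤ)) (j : ℤ) : #(column F j) = colSum F j :=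
  card_image_of_injOn fun _ hp _ hq h ↦
    Prod.ext h ((mem_filter.1 hp).2.trans (mem_filter.1 hq).2.symm)

lemma card_row (F : Finset (ℤ × ℤ)) (i : ℤ) : #(row F i) = rowSum F i :=
  card_image_of_injOn fun _ hp _ hq h ↦
    Prod.ext ((mem_filter.1 hp).2.trans (mem_filter.1 hq).2.symm) h

lemma horizBoundaryLen_eq_card_add_card (F : Finset (ℤ × ℤ)) :
    horizBoundaryLen F =
      #{p ∈ F | (p.1 - 1, p.2) ∉ F} + #{p ∈ F | (p.1 + 1, p.2) ∉ F} := by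
  set down : ℤ × ℤ → (ℤ × ℤ) × (ℤ × ℤ) := fun p ↦ (p, (p.1 - 1, p.2))
  set up : ℤ × ℤ → (ℤ × ℤ) × (ℤ × ℤ) := fun p ↦ (p, (p.1 + 1, p.2))
  have hdown : down.Injective := fun p q h ↦ (Prod.ext_iff.1 h).1
  have hup : up.Injective := fun p q h ↦ (Prod.ext_iff.1 h).1
  have hset : {q : (ℤ × ℤ) × (ℤ × ℤ) | q.1.2 = q.2.2 ∧ |q.1.1 - q.2.1| = 1 ∧ q.1 ∈ F ∧ q.2 ∉ F} =
      ↑({p ∈ F | (p.1 - 1, p.2) ∉ F}.image down ∪ {p ∈ F | (p.1 + 1, p.2) ∉ F}.image up) := by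
    ext ⟨⟨i, j⟩, ⟨i', j'⟩⟩
    simp only [Set.mem_ofPred_eq, coe_union, coe_image, coe_filter, Set.mem_union, Set.mem_image,
      down, up, Prod.mk.injEq, abs_eq zero_le_one]
    constructor
    · rintro ⟨rfl, h | h, hF, hF'⟩
      · obtain rfl : i' = i - 1 := by omega
        exact Or.inl ⟨(i, j), ⟨hF, hF'⟩, rfl, rfl, rfl⟩
      · obtain rfl : i' = i + 1 := by omega
        exact Or.inr ⟨(i, j), ⟨hF, hF'⟩, rfl, rfl, rfl⟩
    · rintro (⟨p, ⟨hF, hF'⟩, rfl, rfl, rfl⟩ | ⟨p, ⟨hF, hF'⟩, rfl, rfl, rfl⟩)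
      · exact ⟨rfl, Or.inl (by ring), hF, hF'⟩
      · exact ⟨rfl, Or.inr (by ring), hF, hF'⟩
  have hdisj : Disjoint ({p ∈ F | (p.1 - 1, p.2) ∉ F}.image down)
      ({p ∈ F | (p.1 + 1, p.2) ∉ F}.image up) := by
    simp only [disjoint_left, mem_image, down, up]
    rintro _ ⟨p, -, rfl⟩ ⟨q, -, h⟩
    simp only [Prod.ext_iff] at h
    omega
  rw [horizBoundaryLen, hset, Set.ncard_coe_finset, card_union_of_disjoint hdisj,
    card_image_of_injective _ hdown, card_image_of_injective _ hup]

lemma card_filter_eq_sum_column {J : Finset ℤ} (hJ : ∀ p ∈ F, p.2 ∈ J)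
    (P : ℤ × ℤ → Prop) [DecidablePred P] :
    #{p ∈ F | P p} = ∑ j ∈ J, #{i ∈ column F j | P (i, j)} := by
  rw [card_eq_sum_card_fiberwise (f := Prod.snd) fun p hp ↦ hJ p (mem_filter.1 hp).1]
  refine sum_congr rfl fun j _ ↦ card_nbij' Prod.fst (fun i ↦ (i, j)) ?_ ?_ ?_ fun _ _ ↦ rfl
  · rintro ⟨i, j'⟩ hp
    simp only [coe_filter, mem_filter, Set.mem_ofPred_eq] at hp
    obtain ⟨⟨hF, hP⟩, rfl⟩ := hp
    simpa using ⟨hF, hP⟩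
  · intro i hi
    simpa using hi
  · rintro ⟨i, j'⟩ hp
    simp only [coe_filter, mem_filter, Set.mem_ofPred_eq] at hp
    rw [hp.2]

/-- Twice the number of maximal runs of consecutive integers in `S`. -/
def runEndCount (S : Finset ℤ) : ℕ := #{i ∈ S | i - 1 ∉ S} + #{i ∈ S | i + 1 ∉ S}

lemma horizBoundaryLen_eq_sum_runEndCount {J : Finset ℤ} (hJ : ∀ p ∈ F, p.2 ∈ J) :
    horizBoundaryLen F = ∑ j ∈ J, runEndCount (column F j) := by
  rw [horizBoundaryLen_eq_card_add_card, card_filter_eq_sum_column hJ,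
    card_filter_eq_sum_column hJ, ← sum_add_distrib]
  simp only [runEndCount, mem_column]

lemma runEndCount_Icc {a b : ℤ} (hab : a ≤ b) : runEndCount (Icc a b) = 2 := by
  have hstart : {i ∈ Icc a b | i - 1 ∉ Icc a b} = {a} := by
    ext; simp only [mem_filter, mem_Icc, mem_singleton]; omega
  have hend : {i ∈ Icc a b | i + 1 ∉ Icc a b} = {b} := by
    ext; simp only [mem_filter, mem_Icc, mem_singleton]; omega
  rw [runEndCount, hstart, hend, card_singleton, card_singleton]

lemma runEndCount_Icc_erase {a b c : ℤ} (hac : a < c) (hcb : c < b) :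
    runEndCount ((Icc a b).erase c) = 4 := by
  have hstart : {i ∈ (Icc a b).erase c | i - 1 ∉ (Icc a b).erase c} = {a, c + 1} := by
    ext; simp only [mem_filter, mem_erase, mem_Icc, mem_insert, mem_singleton]; omega
  have hend : {i ∈ (Icc a b).erase c | i + 1 ∉ (Icc a b).erase c} = {c - 1, b} := by
    ext; simp only [mem_filter, mem_erase, mem_Icc, mem_insert, mem_singleton]; omega
  rw [runEndCount, hstart, hend, card_pair (by omega), card_pair (by omega)]

lemma exists_eq_insert_Icc {S : Finset ℤ} {j₀ : ℤ} (hj₀ : 0 ≤ j₀) (hS : ∀ j ∈ S, 1 ≤ j)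
    (hsub : Icc 1 j₀ ⊆ S) (hcard : (#S : ℤ) = j₀ + 1) :
    ∃ a, j₀ < a ∧ S = insert a (Icc 1 j₀) := by
  obtain ⟨a, ha, rfl⟩ := exists_eq_insert_iff.2 ⟨hsub, by rw [Int.card_Icc]; omega⟩
  refine ⟨a, ?_, rfl⟩
  have := hS a (mem_insert_self _ _)
  simp only [mem_Icc] at ha
  omega

lemma eq_erase_Icc_of_card {S : Finset ℤ} {c x : ℤ} (hS : S ⊆ Icc 1 (c + 1))
    (hcard : (#S : ℤ) = c) (hx : x ∈ Icc 1 (c + 1)) (hxS : x ∉ S) :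
    S = (Icc 1 (c + 1)).erase x :=
  eq_of_subset_of_card_le (subset_erase.2 ⟨hS, hxS⟩) <| by
    rw [card_erase_of_mem hx, Int.card_Icc]; omega

def IsStepPair (S T : Finset ℤ) (c : ℤ) : Prop :=
  (S = Icc 1 c ∧ T = (Icc 1 (c + 1)).erase c) ∨ (T = Icc 1 c ∧ S = (Icc 1 (c + 1)).erase c)

lemma IsStepPair.Icc_subset {S T : Finset ℤ} {c : ℤ} (h : IsStepPair S T c) :
    Icc 1 (c - 1) ⊆ S ∧ Icc 1 (c - 1) ⊆ T := by
  have h₁ : Icc 1 (c - 1) ⊆ Icc 1 c := Icc_subset_Icc le_rfl (by omega)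
  have h₂ : Icc 1 (c - 1) ⊆ (Icc 1 (c + 1)).erase c := fun i hi ↦ by
    simp only [mem_erase, mem_Icc] at hi ⊢; omega
  rcases h with ⟨rfl, rfl⟩ | ⟨rfl, rfl⟩
  exacts [⟨h₁, h₂⟩, ⟨h₂, h₁⟩]

lemma IsStepPair.runEndCount_add {S T : Finset ℤ} {c : ℤ} (h : IsStepPair S T c)
    (hc : 2 ≤ c) :
    runEndCount S + runEndCount T = 6 := by
  rcases h with ⟨rfl, rfl⟩ | ⟨rfl, rfl⟩ <;>
    rw [runEndCount_Icc (by omega), runEndCount_Icc_erase (by omega) (by omega)]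

lemma sum_Icc_two_mul {M : Type*} [AddCommMonoid M] (g : ℤ → M) (k : ℕ) :
    ∑ j ∈ Icc (1 : ℤ) (2 * k), g j = ∑ l ∈ range k, (g (2 * l + 1) + g (2 * l + 2)) := by
  induction k with
  | zero => simp
  | succ k ih =>
    have hIcc : Icc (1 : ℤ) (2 * ((k + 1 : ℕ) : ℤ)) =
        insert (2 * (k : ℤ) + 2) (insert (2 * (k : ℤ) + 1) (Icc 1 (2 * (k : ℤ)))) := by
      ext; simp only [mem_Icc, mem_insert]; omega
    rw [hIcc, sum_insert (by simp), sum_insert (by simp), ih, sum_range_succ]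
    abel

/-- Each of the columns `j₀ + 1`, `j₀ + 2` must meet row `i₀` or row `i₀ + 1`, and each of these
rows has room for only one cell beyond the columns `1, …, j₀`. -/
lemma isStepPair_of_card {j₀ i₀ : ℤ} (hj₀ : 0 ≤ j₀) (hi₀ : 1 ≤ i₀)
    (hcol : ∀ p ∈ F, 1 ≤ p.2) (hrow : ∀ p ∈ F, j₀ < p.2 → 1 ≤ p.1 ∧ p.1 ≤ i₀ + 1)
    (hfill₀ : Icc 1 j₀ ⊆ row F i₀) (hfill₁ : Icc 1 j₀ ⊆ row F (i₀ + 1))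
    (hrow₀ : (#(row F i₀) : ℤ) = j₀ + 1) (hrow₁ : (#(row F (i₀ + 1)) : ℤ) = j₀ + 1)
    (hcol₁ : (#(column F (j₀ + 1)) : ℤ) = i₀) (hcol₂ : (#(column F (j₀ + 2)) : ℤ) = i₀) :
    IsStepPair (column F (j₀ + 1)) (column F (j₀ + 2)) i₀ ∧
      ∀ p ∈ F, j₀ + 2 < p.2 → p.1 ≤ i₀ - 1 := by
  obtain ⟨a, ha, hrowa⟩ :=
    exists_eq_insert_Icc hj₀ (fun j hj ↦ hcol _ (mem_row.1 hj)) hfill₀ hrow₀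
  obtain ⟨b, hb, hrowb⟩ :=
    exists_eq_insert_Icc hj₀ (fun j hj ↦ hcol _ (mem_row.1 hj)) hfill₁ hrow₁
  have hmem₀ : ∀ j, j₀ < j → ((i₀, j) ∈ F ↔ j = a) := fun j hj ↦ by
    rw [← mem_row, hrowa]; simp only [mem_insert, mem_Icc]; omega
  have hmem₁ : ∀ j, j₀ < j → ((i₀ + 1, j) ∈ F ↔ j = b) := fun j hj ↦ by
    rw [← mem_row, hrowb]; simp only [mem_insert, mem_Icc]; omega
  have hsub : ∀ j, j₀ < j → column F j ⊆ Icc 1 (i₀ + 1) := fun j hj i hi ↦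
    mem_Icc.2 (hrow _ (mem_column.1 hi) hj)
  have hab : ∀ j, j₀ < j → (#(column F j) : ℤ) = i₀ → j = a ∨ j = b := by
    intro j hj hcard
    by_contra! hne
    have hcolj := eq_erase_Icc_of_card (hsub j hj) hcard (x := i₀ + 1)
      (by simp only [mem_Icc]; omega)
      (by rw [mem_column, hmem₁ j hj]; exact hne.2)
    have : i₀ ∈ column F j := by rw [hcolj]; simp only [mem_erase, mem_Icc]; omega
    exact hne.1 ((hmem₀ j hj).1 (mem_column.1 this))
  have hpos : (a = j₀ + 1 ∧ b = j₀ + 2) ∨ (a = j₀ + 2 ∧ b = j₀ + 1) := by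
    have := hab _ (by omega) hcol₁
    have := hab _ (by omega) hcol₂
    omega
  have hshape : column F a = Icc 1 i₀ ∧ column F b = (Icc 1 (i₀ + 1)).erase i₀ := by
    have hcarda : (#(column F a) : ℤ) = i₀ := by
      rcases hpos with ⟨rfl, -⟩ | ⟨rfl, -⟩ <;> assumption
    have hcardb : (#(column F b) : ℤ) = i₀ := by
      rcases hpos with ⟨-, rfl⟩ | ⟨-, rfl⟩ <;> assumption
    constructor
    · rw [eq_erase_Icc_of_card (hsub a ha) hcarda (x := i₀ + 1) (by simp only [mem_Icc]; omega)
        (by rw [mem_column, hmem₁ a ha]; omega)]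
      ext; simp only [mem_erase, mem_Icc]; omega
    · exact eq_erase_Icc_of_card (hsub b hb) hcardb (by simp only [mem_Icc]; omega)
        (by rw [mem_column, hmem₀ b hb]; omega)
  refine ⟨?_, fun p hp hp₂ ↦ ?_⟩
  · rcases hpos with ⟨rfl, rfl⟩ | ⟨rfl, rfl⟩
    exacts [Or.inl hshape, Or.inr hshape]
  · have h₀ := (hmem₀ p.2 (by omega)).not.2 (by omega)
    have h₁ := (hmem₁ p.2 (by omega)).not.2 (by omega)
    have := hrow p hp (by omega)
    have : p.1 ≠ i₀ := fun h ↦ h₀ (h ▸ hp)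
    have : p.1 ≠ i₀ + 1 := fun h ↦ h₁ (h ▸ hp)
    omega

end BinaryImage

namespace Example3

open BinaryImage

variable {k : ℕ} {F : Finset (ℤ × ℤ)}

lemma mem_bounds (hF : example3Image (2 * k + 2) (2 * k) F) :
    ∀ p ∈ F, 1 ≤ p.1 ∧ p.1 ≤ 2 * k + 1 ∧ 1 ≤ p.2 ∧ p.2 ≤ 2 * k := by
  obtain ⟨hbox, -, -, hlast, -⟩ := hF
  intro p hp
  have hne := filter_eq_empty_iff.1 (card_eq_zero.1 hlast) hp
  have := hbox p hp
  simp only [mem_Icc] at this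
  push_cast at hne this
  omega

lemma card_row_pair (hF : example3Image (2 * k + 2) (2 * k) F) {l : ℕ} (hl : l < k) :
    (#(row F (2 * k - 2 * l)) : ℤ) = 2 * l + 1 ∧
      (#(row F (2 * k - 2 * l + 1)) : ℤ) = 2 * l + 1 := by
  obtain ⟨h₀, h₁⟩ := hF.2.2.1 (k - l) (by omega) (by push_cast; omega)
  rw [show 2 * ((k : ℤ) - l) = 2 * k - 2 * l by ring] at h₀ h₁
  rw [card_row, card_row]
  push_cast at h₀ h₁
  omega

lemma card_column_pair (hF : example3Image (2 * k + 2) (2 * k) F) {l : ℕ} (hl : l < k) :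
    (#(column F (2 * l + 1)) : ℤ) = 2 * k - 2 * l ∧
      (#(column F (2 * l + 2)) : ℤ) = 2 * k - 2 * l := by
  obtain ⟨h₁, h₂⟩ := hF.2.2.2.2 (l + 1) (by omega) (by push_cast; omega)
  rw [show 2 * ((l : ℤ) + 1) - 1 = 2 * l + 1 by ring] at h₁
  rw [show 2 * ((l : ℤ) + 1) = 2 * l + 2 by ring] at h₂
  rw [card_column, card_column]
  push_cast at h₁ h₂
  omega

lemma isStepPair_column_of_le (hF : example3Image (2 * k + 2) (2 * k) F) :
    ∀ l ≤ k,
      (∀ l' < l, IsStepPair (column F (2 * l' + 1)) (column F (2 * l' + 2)) (2 * k - 2 * l')) ∧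
        ∀ p ∈ F, 2 * l < p.2 → p.1 ≤ 2 * k - 2 * l + 1 := by
  intro l
  induction l with
  | zero =>
    intro _
    exact ⟨by simp, fun p hp _ ↦ by simpa using (mem_bounds hF p hp).2.1⟩
  | succ l ih =>
    intro hl
    obtain ⟨hpairs, hlow⟩ := ih (by omega)
    have hfill : ∀ i : ℤ, 1 ≤ i → i ≤ 2 * k - 2 * l + 1 → Icc 1 (2 * (l : ℤ)) ⊆ row F i := by
      intro i hi₁ hi₂ j hj
      rw [mem_Icc] at hj
      obtain ⟨l', hl', hj'⟩ : ∃ l' : ℕ, l' < l ∧ (j = 2 * l' + 1 ∨ j = 2 * l' + 2) :=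
        ⟨((j - 1) / 2).toNat, by omega, by omega⟩
      have hsub := (hpairs l' hl').Icc_subset
      have hi : i ∈ Icc (1 : ℤ) (2 * k - 2 * l' - 1) := mem_Icc.2 ⟨hi₁, by omega⟩
      rw [mem_row, ← mem_column]
      rcases hj' with rfl | rfl
      exacts [hsub.1 hi, hsub.2 hi]
    obtain ⟨hrow₀, hrow₁⟩ := card_row_pair hF (l := l) (by omega)
    obtain ⟨hcol₁, hcol₂⟩ := card_column_pair hF (l := l) (by omega)
    obtain ⟨hpair, hlow'⟩ := isStepPair_of_card (j₀ := 2 * l) (i₀ := 2 * k - 2 * l)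
      (by omega) (by omega) (fun p hp ↦ (mem_bounds hF p hp).2.2.1)
      (fun p hp hp₂ ↦ ⟨(mem_bounds hF p hp).1, hlow p hp hp₂⟩)
      (hfill _ (by omega) (by omega)) (hfill _ (by omega) le_rfl) hrow₀ hrow₁ hcol₁ hcol₂
    refine ⟨fun l' hl' ↦ ?_, fun p hp hp₂ ↦ ?_⟩
    · rcases Nat.lt_succ_iff_lt_or_eq.1 hl' with h | rfl
      exacts [hpairs l' h, hpair]
    · have := hlow' p hp (by push_cast at hp₂; omega)
      push_cast
      omega

theorem horizBoundaryLen_eq (hF : example3Image (2 * k + 2) (2 * k) F) :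
    horizBoundaryLen F = 3 * (2 * k) := by
  have hpairs := (isStepPair_column_of_le hF k le_rfl).1
  rw [horizBoundaryLen_eq_sum_runEndCount (J := Icc 1 (2 * k))
      fun p hp ↦ by have := mem_bounds hF p hp; simp only [mem_Icc]; omega,
    sum_Icc_two_mul, sum_congr rfl fun l hl ↦
      (hpairs l (mem_range.1 hl)).runEndCount_add (by have := mem_range.1 hl; omega)]
  rw [sum_const, card_range, smul_eq_mul]
  ring

/-- Column `2l - 1` is `[1, c]` and column `2l` is `[1, c + 1] \ {c}`, for `c = 2k - 2l + 2`. -/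
noncomputable def staircase (k : ℕ) : Finset (ℤ × ℤ) :=
  {p ∈ Icc (1 : ℤ) (2 * k + 1) ×ˢ Icc (1 : ℤ) (2 * k) |
    p.1 + p.2 ≤ 2 * k + 1 ∨ (p.2 % 2 = 0 ∧ p.1 + p.2 = 2 * k + 3)}

lemma staircase_spec (k : ℕ) : example3Image (2 * k + 2) (2 * k) (staircase k) := by
  refine ⟨fun p hp ↦ ?_, ?_, fun l hl₁ hl₂ ↦ ?_, ?_, fun l hl₁ hl₂ ↦ ?_⟩
  · simp only [staircase, mem_filter, mem_product, mem_Icc] at hp ⊢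
    push_cast
    omega
  · rw [← card_row, show row (staircase k) 1 = Icc (1 : ℤ) (2 * k) by
        ext; simp only [staircase, mem_row, mem_filter, mem_product, mem_Icc]; omega,
      Int.card_Icc]
    omega
  · push_cast at hl₂ ⊢
    rw [← card_row, ← card_row,
      show row (staircase k) (2 * l) = Icc 1 (2 * k - 2 * l + 1) by
        ext; simp only [staircase, mem_row, mem_filter, mem_product, mem_Icc]; omega,
      show row (staircase k) (2 * l + 1) = insert (2 * k - 2 * l + 2) (Icc 1 (2 * k - 2 * l)) by
        ext; simp only [staircase, mem_row, mem_filter, mem_product, mem_Icc, mem_insert]; omega,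
      card_insert_of_notMem (by simp), Int.card_Icc, Int.card_Icc]
    omega
  · rw [rowSum, card_eq_zero, filter_eq_empty_iff]
    intro p hp
    simp only [staircase, mem_filter, mem_product, mem_Icc] at hp
    push_cast
    omega
  · push_cast at hl₂ ⊢
    rw [← card_column, ← card_column,
      show column (staircase k) (2 * l - 1) = Icc 1 (2 * k - 2 * l + 2) by
        ext; simp only [staircase, mem_column, mem_filter, mem_product, mem_Icc]; omega,
      show column (staircase k) (2 * l) =
          (Icc 1 (2 * k - 2 * l + 3)).erase (2 * k - 2 * l + 2) by
        ext; simp only [staircase, mem_column, mem_filter, mem_product, mem_Icc, mem_erase]; omega,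
      card_erase_of_mem (by simp only [mem_Icc]; omega), Int.card_Icc, Int.card_Icc]
    omega

end Example3

theorem example3_general (n : ℕ) (heven : Even n) (m : ℕ) (hm : m = n + 2) :
    (∀ F : Finset (ℤ × ℤ), example3Image m n F → 3 * n ≤ horizBoundaryLen F) ∧
    (∃ F : Finset (ℤ × ℤ), example3Image m n F ∧ horizBoundaryLen F = 3 * n) := by
  obtain ⟨k, rfl⟩ := heven
  rw [← two_mul] at hm ⊢
  subst hm
  exact ⟨fun F hF ↦ (Example3.horizBoundaryLen_eq hF).ge,
    ⟨_, Example3.staircase_spec k, Example3.horizBoundaryLen_eq (Example3.staircase_spec k)⟩⟩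

/-- Example 3: for these line sums, every reconstruction has horizontal boundary of
length at least `3n`, and this bound is attained by some reconstruction. -/
theorem example3 (n : ℕ) (hn : 2 ≤ n) (heven : Even n) (m : ℕ) (hm : m = n + 2) :
    (∀ F : Finset (ℤ × ℤ), example3Image m n F → 3 * n ≤ horizBoundaryLen F) ∧
    (∃ F : Finset (ℤ × ℤ), example3Image m n F ∧ horizBoundaryLen F = 3 * n) :=
  example3_general n heven m hm
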